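/- arXiv:1506.07817 — 5 statements merged into one kernel-verified Lean document; each statement's English description precedes it below -/
import Mathlib

section
/- Let n ≥ 2 be an integer and let Z_n denote the cyclic group of order n. The strong power graph P_s(Z_n) is not connected if and only if n is a prime number. -/
/-!
In `ZMod n` a vertex `x ≠ 0` is adjacent to `0` exactly when it is not a generator, i.e. when its
additive order is less than `n`. If `n` is prime every nonzero element is a generator, so `0` is
an isolated vertex. If `n` has a proper divisor `1 < d < n`, then every generator `x` is adjacent
to the non-generator `d • x`, which is adjacent to `0`; hence all vertices lie in the component
of `0`.
-/

/-- The strong power graph of the cyclic group `ZMod n` (written additively):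
two distinct vertices `x` and `y` are adjacent iff `a • x = b • y` for some
positive integers `a, b < n`. -/
def strongPowerGraphZ (n : ℕ) : SimpleGraph (ZMod n) where
  Adj x y := x ≠ y ∧ ∃ a b : ℕ, 0 < a ∧ a < n ∧ 0 < b ∧ b < n ∧ a • x = b • y
  symm := by
    constructor
    rintro x y ⟨h, a, b, ha, ha', hb, hb', hab⟩
    exact ⟨h.symm, b, a, hb, hb', ha, ha', hab.symm⟩
  loopless := by
    constructor
    rintro x ⟨h, -⟩
    exact h rfl

theorem exists_nsmul_eq_zero_iff_addOrderOf_lt {G : Type*} [AddLeftCancelMonoid G] [Finite G]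
    (x : G) (n : ℕ) : (∃ a, 0 < a ∧ a < n ∧ a • x = 0) ↔ addOrderOf x < n := by
  constructor
  · rintro ⟨a, ha, han, hax⟩
    exact (addOrderOf_le_of_nsmul_eq_zero ha hax).trans_lt han
  · exact fun h => ⟨addOrderOf x, addOrderOf_pos x, h, addOrderOf_nsmul_eq_zero x⟩

theorem ZMod.addOrderOf_dvd {n : ℕ} (x : ZMod n) : addOrderOf x ∣ n :=
  addOrderOf_dvd_of_nsmul_eq_zero (by simp [nsmul_eq_mul])

section

variable {n : ℕ}

theorem strongPowerGraphZ_adj_zero_iff (hn : 1 < n) (x : ZMod n) :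
    (strongPowerGraphZ n).Adj x 0 ↔ x ≠ 0 ∧ addOrderOf x < n := by
  have : NeZero n := ⟨by omega⟩
  simp only [strongPowerGraphZ, smul_zero, ← exists_nsmul_eq_zero_iff_addOrderOf_lt]
  exact and_congr_right fun _ =>
    ⟨fun ⟨a, _, ha, han, _, _, hax⟩ => ⟨a, ha, han, hax⟩,
      fun ⟨a, ha, han, hax⟩ => ⟨a, 1, ha, han, one_pos, hn, hax⟩⟩

theorem strongPowerGraphZ_adj_nsmul {x : ZMod n} {b : ℕ} (hb : 0 < b) (hbn : b < n)
    (hx : x ≠ b • x) : (strongPowerGraphZ n).Adj x (b • x) :=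
  ⟨hx, b, 1, hb, hbn, one_pos, by omega, (one_nsmul _).symm⟩

theorem strongPowerGraphZ_not_adj_zero_of_prime (hp : n.Prime) (x : ZMod n) :
    ¬ (strongPowerGraphZ n).Adj x 0 := by
  rintro hadj
  obtain ⟨hx, hlt⟩ := (strongPowerGraphZ_adj_zero_iff hp.one_lt x).1 hadj
  rcases hp.eq_one_or_self_of_dvd _ x.addOrderOf_dvd with h | h
  · exact hx (AddMonoid.addOrderOf_eq_one_iff.1 h)
  · exact hlt.ne h

theorem strongPowerGraphZ_not_connected_of_prime (hp : n.Prime) :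
    ¬ (strongPowerGraphZ n).Connected := by
  have : Fact n.Prime := ⟨hp⟩
  intro h
  obtain ⟨x, hx⟩ := h.preconnected.exists_adj_of_nontrivial 0
  exact strongPowerGraphZ_not_adj_zero_of_prime hp x hx.symm

theorem strongPowerGraphZ_reachable_zero_of_eq_mul {d q : ℕ} (hd : 1 < d) (hq : 1 < q)
    (x : ZMod (d * q)) : (strongPowerGraphZ (d * q)).Reachable x 0 := by
  have hn : 1 < d * q := by nlinarith
  by_cases hx : x = 0
  · rw [hx]
  by_cases hord : addOrderOf x < d * q
  · exact ((strongPowerGraphZ_adj_zero_iff hn x).2 ⟨hx, hord⟩).reachable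
  have hgen : addOrderOf x = d * q :=
    (Nat.le_of_dvd (by omega) x.addOrderOf_dvd).antisymm (not_lt.1 hord)
  have hdx : addOrderOf (d • x) = q := by
    rw [addOrderOf_nsmul' x (by omega), hgen, Nat.gcd_mul_right_left,
      Nat.mul_div_cancel_left _ (by omega)]
  have hqn : q < d * q := by nlinarith
  have hne : x ≠ d • x := fun h => by
    rw [← h, hgen] at hdx
    omega
  have hdx0 : d • x ≠ 0 := fun h => by
    rw [h, addOrderOf_zero] at hdx
    omega
  exact (strongPowerGraphZ_adj_nsmul (by omega) (by nlinarith) hne).reachable.trans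
    ((strongPowerGraphZ_adj_zero_iff hn _).2 ⟨hdx0, by rwa [hdx]⟩).reachable

theorem strongPowerGraphZ_connected_of_not_prime (hn : 2 ≤ n) (hp : ¬ n.Prime) :
    (strongPowerGraphZ n).Connected := by
  obtain ⟨d, q, hdn, hqn, rfl⟩ := (Nat.not_prime_iff_exists_mul_eq hn).1 hp
  have hd : 1 < d := by nlinarith
  have hq : 1 < q := by nlinarith
  have : Nonempty (ZMod (d * q)) := ⟨0⟩
  exact ⟨fun x y => (strongPowerGraphZ_reachable_zero_of_eq_mul hd hq x).trans
    (strongPowerGraphZ_reachable_zero_of_eq_mul hd hq y).symm⟩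

end

/-- For `n ≥ 2`, the strong power graph of `ZMod n` is not connected if and
only if `n` is a prime number. -/
theorem strongPowerGraphZ_not_connected_iff_prime (n : ℕ) (hn : 2 ≤ n) :
    ¬ (strongPowerGraphZ n).Connected ↔ n.Prime :=
  ⟨not_imp_comm.1 (strongPowerGraphZ_connected_of_not_prime hn),
    strongPowerGraphZ_not_connected_of_prime⟩
end

section
/- Let n ≥ 2 be an integer and let Z_n = {0, 1, ..., n-1} be the cyclic group of order n. The subgraph of the strong power graph P_s(Z_n) induced by the set of nonzero elements Z_n \ {0} is complete, i.e., any two distinct nonzero elements of Z_n are adjacent in P_s(Z_n). -/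
/-! Both `y.val • x` and `x.val • y` equal the ring product `x * y`, and the exponents
`y.val`, `x.val` lie strictly between `0` and `n` as soon as `x` and `y` are nonzero. -/

theorem ZMod.val_nsmul_eq_val_nsmul {n : ℕ} [NeZero n] (x y : ZMod n) :
    y.val • x = x.val • y := by
  simp only [nsmul_eq_mul, ZMod.natCast_val, ZMod.cast_id', id, mul_comm]

theorem strongPowerGraphZ_adj_of_ne_zero {n : ℕ} [NeZero n] {x y : ZMod n}
    (hx : x ≠ 0) (hy : y ≠ 0) (hxy : x ≠ y) : (strongPowerGraphZ n).Adj x y :=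
  ⟨hxy, y.val, x.val, ZMod.val_pos.mpr hy, y.val_lt, ZMod.val_pos.mpr hx, x.val_lt,
    ZMod.val_nsmul_eq_val_nsmul x y⟩

/-- For `n ≥ 2`, the subgraph of the strong power graph of `ZMod n` induced by
the nonzero elements is complete: any two distinct nonzero elements are adjacent. -/
theorem strongPowerGraphZ_induced_nonzero_complete (n : ℕ) (hn : 2 ≤ n) :
    ∀ x y : ZMod n, x ≠ 0 → y ≠ 0 → x ≠ y → (strongPowerGraphZ n).Adj x y := by
  have : NeZero n := ⟨by omega⟩
  exact fun _ _ => strongPowerGraphZ_adj_of_ne_zero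
end

section
/- Let n be a composite number and let Z_n be the cyclic group of order n. The characteristic polynomial of the distance matrix of the strong power graph P_s(Z_n) equals (x+1)^{n-3} · ( x^3 + (3-n)x^2 + (3 - 2n - 3φ(n))x - φ(n)^2 - φ(n)(4-n) - n + 1 ), where φ is Euler's totient function. -/
/-- The distance matrix (with real entries) of the strong power graph of `ZMod n`. -/
noncomputable def distMatrixZ (n : ℕ) [NeZero n] : Matrix (ZMod n) (ZMod n) ℝ :=
  Matrix.of fun i j => ((strongPowerGraphZ n).dist i j : ℝ)

open Classical in
/-- The adjacency matrix (with real entries) of the strong power graph of `ZMod n`. -/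
noncomputable def adjMatrixZ (n : ℕ) [NeZero n] : Matrix (ZMod n) (ZMod n) ℝ :=
  Matrix.of fun i j => if (strongPowerGraphZ n).Adj i j then 1 else 0

open Polynomial

theorem exists_ne_zero_mul_eq_zero_of_not_isUnit {R : Type*} [CommRing R] [Finite R] {x : R}
    (hx : ¬IsUnit x) : ∃ a, a ≠ 0 ∧ a * x = 0 := by
  rw [isUnit_iff_mem_nonZeroDivisors_of_finite, notMem_nonZeroDivisors_iff_right] at hx
  obtain ⟨a, hax, ha⟩ := hx
  exact ⟨a, ha, hax⟩

namespace ZMod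

variable {n : ℕ}

theorem exists_ne_zero_not_isUnit (hn : 2 ≤ n) (hnp : ¬n.Prime) :
    ∃ w : ZMod n, w ≠ 0 ∧ ¬IsUnit w := by
  obtain ⟨d, hdn, hd2, hdlt⟩ := Nat.exists_dvd_of_not_prime2 hn hnp
  refine ⟨d, fun h => ?_, fun h => ?_⟩
  · rw [natCast_eq_zero_iff] at h
    exact (Nat.le_of_dvd (by omega) h).not_gt hdlt
  · rw [isUnit_iff_coprime, Nat.Coprime, Nat.gcd_eq_left hdn] at h
    omega

end ZMod

section StrongPowerGraph

variable {n : ℕ} [NeZero n]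

theorem strongPowerGraphZ_adj_iff_exists_mul {x y : ZMod n} :
    (strongPowerGraphZ n).Adj x y ↔ x ≠ y ∧ ∃ a b : ZMod n, a ≠ 0 ∧ b ≠ 0 ∧ a * x = b * y := by
  have natCast_ne_zero {a : ℕ} (ha : 0 < a) (han : a < n) : (a : ZMod n) ≠ 0 := by
    rw [Ne, ZMod.natCast_eq_zero_iff]
    exact fun h => (Nat.le_of_dvd ha h).not_gt han
  refine and_congr_right fun _ => ⟨?_, ?_⟩
  · rintro ⟨a, b, ha, han, hb, hbn, hab⟩
    refine ⟨a, b, natCast_ne_zero ha han, natCast_ne_zero hb hbn, ?_⟩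
    simpa only [nsmul_eq_mul] using hab
  · rintro ⟨a, b, ha, hb, hab⟩
    refine ⟨a.val, b.val, ZMod.val_pos.2 ha, a.val_lt, ZMod.val_pos.2 hb, b.val_lt, ?_⟩
    simpa only [nsmul_eq_mul, ZMod.natCast_zmod_val] using hab

theorem strongPowerGraphZ_adj_iff {x y : ZMod n} :
    (strongPowerGraphZ n).Adj x y ↔ x ≠ y ∧ ¬(x = 0 ∧ IsUnit y) ∧ ¬(y = 0 ∧ IsUnit x) := by
  rw [strongPowerGraphZ_adj_iff_exists_mul]
  refine and_congr_right fun hxy => ⟨?_, ?_⟩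
  · rintro ⟨a, b, ha, hb, hab⟩
    refine ⟨?_, ?_⟩ <;> rintro ⟨rfl, hu⟩
    · rw [mul_zero, eq_comm, hu.mul_left_eq_zero] at hab
      exact hb hab
    · rw [mul_zero, hu.mul_left_eq_zero] at hab
      exact ha hab
  · rintro ⟨hxy0, hyx0⟩
    have : Nontrivial (ZMod n) := nontrivial_of_ne x y hxy
    by_cases hx : IsUnit x
    · obtain ⟨u, rfl⟩ := hx
      have hy : y ≠ 0 := fun hy => hyx0 ⟨hy, u.isUnit⟩
      exact ⟨y * ↑u⁻¹, 1, (Units.mul_left_eq_zero _).not.2 hy, one_ne_zero, by simp⟩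
    by_cases hy : IsUnit y
    · obtain ⟨u, rfl⟩ := hy
      have hx : x ≠ 0 := fun hx => hxy0 ⟨hx, u.isUnit⟩
      exact ⟨1, x * ↑u⁻¹, one_ne_zero, (Units.mul_left_eq_zero _).not.2 hx, by simp⟩
    obtain ⟨a, ha, hax⟩ := exists_ne_zero_mul_eq_zero_of_not_isUnit hx
    obtain ⟨b, hb, hby⟩ := exists_ne_zero_mul_eq_zero_of_not_isUnit hy
    exact ⟨a, b, ha, hb, hax.trans hby.symm⟩

theorem strongPowerGraphZ_dist (hn : 2 ≤ n) (hnp : ¬n.Prime) (x y : ZMod n) :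
    (strongPowerGraphZ n).dist x y =
      if x = y then 0 else if x = 0 ∧ IsUnit y ∨ y = 0 ∧ IsUnit x then 2 else 1 := by
  split_ifs with hxy hP
  · simp [hxy]
  · obtain ⟨w, hw0, hwu⟩ := ZMod.exists_ne_zero_not_isUnit hn hnp
    have hw : w ∈ (strongPowerGraphZ n).commonNeighbors x y := by
      rw [SimpleGraph.mem_commonNeighbors, strongPowerGraphZ_adj_iff, strongPowerGraphZ_adj_iff]
      rcases hP with ⟨rfl, hy⟩ | ⟨rfl, hx⟩
      · exact ⟨⟨hw0.symm, by tauto, by tauto⟩, ⟨fun h => hwu (h ▸ hy), by tauto, by tauto⟩⟩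
      · exact ⟨⟨fun h => hwu (h ▸ hx), by tauto, by tauto⟩, ⟨hw0.symm, by tauto, by tauto⟩⟩
    have hnadj : ¬(strongPowerGraphZ n).Adj x y := by
      rw [strongPowerGraphZ_adj_iff]
      tauto
    have hxy2 : (strongPowerGraphZ n).edist x y = 2 :=
      SimpleGraph.edist_eq_two_iff.2 ⟨hxy, hnadj, w, hw⟩
    simp [SimpleGraph.dist, hxy2]
  · exact SimpleGraph.dist_eq_one_iff_adj.2 (strongPowerGraphZ_adj_iff.2 (by tauto))

end StrongPowerGraph

section DistanceMatrix

variable (n : ℕ)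

noncomputable def zeroIndicator : ZMod n → ℝ := fun x => if x = 0 then 1 else 0

variable {n} in
theorem zeroIndicator_mul_self (x : ZMod n) :
    zeroIndicator n x * zeroIndicator n x = zeroIndicator n x := by
  by_cases hx : x = 0 <;> simp [zeroIndicator, hx]

variable [NeZero n]

noncomputable def unitIndicator : ZMod n → ℝ := fun x => if IsUnit x then 1 else 0

noncomputable def distFactorLeft : Matrix (ZMod n) (Fin 3) ℝ :=
  Matrix.of fun x => ![1, zeroIndicator n x, unitIndicator n x]

noncomputable def distFactorRight : Matrix (Fin 3) (ZMod n) ℝ :=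
  Matrix.of ![fun _ => 1, unitIndicator n, zeroIndicator n]

variable {n}

theorem sum_zeroIndicator : ∑ x : ZMod n, zeroIndicator n x = 1 := by
  simp [zeroIndicator]

theorem sum_unitIndicator : ∑ x : ZMod n, unitIndicator n x = n.totient := by
  have hunits : Finset.univ.filter (IsUnit : ZMod n → Prop) =
      Finset.univ.map ⟨Units.val, Units.val_injective⟩ := by
    ext x
    simp [IsUnit]
  simp [unitIndicator, Finset.sum_boole, hunits, ZMod.card_units_eq_totient]

theorem unitIndicator_mul_self (x : ZMod n) :
    unitIndicator n x * unitIndicator n x = unitIndicator n x := by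
  by_cases hx : IsUnit x <;> simp [unitIndicator, hx]

theorem zeroIndicator_mul_unitIndicator (hn : 2 ≤ n) (x : ZMod n) :
    zeroIndicator n x * unitIndicator n x = 0 := by
  have : Fact (1 < n) := ⟨hn⟩
  by_cases hx : x = 0 <;> simp [zeroIndicator, unitIndicator, hx]

theorem distFactorLeft_mul_distFactorRight_apply (x y : ZMod n) :
    (distFactorLeft n * distFactorRight n) x y =
      1 + zeroIndicator n x * unitIndicator n y + unitIndicator n x * zeroIndicator n y := by
  simp [Matrix.mul_apply, Fin.sum_univ_three, distFactorLeft, distFactorRight]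

theorem distMatrixZ_eq_mul_sub_one (hn : 2 ≤ n) (hnp : ¬n.Prime) :
    distMatrixZ n = distFactorLeft n * distFactorRight n - 1 := by
  have : Fact (1 < n) := ⟨hn⟩
  ext x y
  rw [Matrix.sub_apply, distFactorLeft_mul_distFactorRight_apply, distMatrixZ, Matrix.of_apply,
    strongPowerGraphZ_dist hn hnp]
  by_cases hxy : x = y
  · subst hxy
    simp [zeroIndicator_mul_unitIndicator hn, mul_comm (unitIndicator n x)]
  · rw [if_neg hxy, Matrix.one_apply_ne hxy]
    by_cases hx : x = 0 <;> by_cases hy : y = 0 <;> simp_all [zeroIndicator, unitIndicator]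
    all_goals split_ifs <;> norm_num

theorem distFactorRight_mul_distFactorLeft (hn : 2 ≤ n) :
    distFactorRight n * distFactorLeft n =
      !![(n : ℝ), 1, (n.totient : ℝ); (n.totient : ℝ), 0, (n.totient : ℝ); 1, 1, 0] := by
  ext k l
  fin_cases k <;> fin_cases l <;>
    simp [Matrix.mul_apply, distFactorLeft, distFactorRight, sum_unitIndicator, sum_zeroIndicator,
      unitIndicator_mul_self, zeroIndicator_mul_self, zeroIndicator_mul_unitIndicator hn,
      mul_comm (unitIndicator n _) (zeroIndicator n _)]

theorem charpoly_distFactorRight_mul_distFactorLeft (hn : 2 ≤ n) :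
    (distFactorRight n * distFactorLeft n).charpoly =
      X ^ 3 - C (n : ℝ) * X ^ 2 - 3 * C (n.totient : ℝ) * X +
        C ((n : ℝ) * n.totient - n.totient - (n.totient : ℝ) ^ 2) := by
  rw [distFactorRight_mul_distFactorLeft hn]
  simp [Matrix.charpoly, Matrix.det_fin_three]
  ring

end DistanceMatrix

/-- For a composite number `n`, the characteristic polynomial of the distance matrix of
the strong power graph of `ZMod n` is
`(x+1)^(n-3) * (x^3 + (3-n)x^2 + (3-2n-3φ(n))x - φ(n)^2 - φ(n)(4-n) - n + 1)`. -/
theorem distMatrixZ_charpoly (n : ℕ) [NeZero n] (hn : 2 ≤ n) (hnp : ¬ n.Prime) :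
    (distMatrixZ n).charpoly =
      (X + 1) ^ (n - 3) *
        (X ^ 3 + C ((3 : ℝ) - (n : ℝ)) * X ^ 2
          + C ((3 : ℝ) - 2 * (n : ℝ) - 3 * (n.totient : ℝ)) * X
          + C (-(n.totient : ℝ) ^ 2 - (n.totient : ℝ) * (4 - (n : ℝ)) - (n : ℝ) + 1)) := by
  have h3 : 3 ≤ n := hn.lt_of_ne fun h => hnp (h ▸ Nat.prime_two)
  rw [distMatrixZ_eq_mul_sub_one hn hnp, ← map_one (Matrix.scalar (ZMod n)),
    Matrix.charpoly_sub_scalar, Matrix.charpoly_mul_comm_of_le _ _ (by simpa using h3),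
    charpoly_distFactorRight_mul_distFactorLeft hn, mul_comp, pow_comp, X_comp, C_1, ZMod.card,
    Fintype.card_fin]
  congr 1
  simp [map_ofNat]
  ring
end

section
/- Let G be a finite group of order n that is not cyclic. Then the characteristic polynomial of the distance matrix of the strong power graph P_s(G) equals (x - (n-1)) · (x+1)^{n-1}; equivalently, the distance spectrum of P_s(G) consists of the eigenvalue n-1 with multiplicity 1 and the eigenvalue -1 with multiplicity n-1. -/
/-!
In a non-cyclic group of order `n` every element has order `< n`, so any two distinct `x`, `y`
are adjacent in the strong power graph via `x ^ orderOf x = 1 = y ^ orderOf y`. The graph is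
therefore complete and its distance matrix is `J - I`, with `J` the rank-one all-ones matrix.
Shifting the characteristic polynomial `X ^ n - n X ^ (n - 1)` of `J` by `1` gives the result.
-/

/-- The strong power graph of a finite group `G` of order `n`: two distinct
vertices `x` and `y` are adjacent iff `x ^ a = y ^ b` for some positive
integers `a, b < n`. -/
def strongPowerGraph (G : Type*) [Group G] [Fintype G] : SimpleGraph G where
  Adj x y := x ≠ y ∧ ∃ a b : ℕ, 0 < a ∧ a < Fintype.card G ∧ 0 < b ∧ b < Fintype.card G ∧
    x ^ a = y ^ b
  symm := by
    constructor
    rintro x y ⟨h, a, b, ha, ha', hb, hb', hab⟩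
    exact ⟨h.symm, b, a, hb, hb', ha, ha', hab.symm⟩
  loopless := by
    constructor
    rintro x ⟨h, -⟩
    exact h rfl

/-- The distance matrix (with real entries) of the strong power graph of `G`. -/
noncomputable def distMatrixG (G : Type*) [Group G] [Fintype G] : Matrix G G ℝ :=
  Matrix.of fun i j => ((strongPowerGraph G).dist i j : ℝ)

open Classical in
/-- The adjacency matrix (with real entries) of the strong power graph of `G`. -/
noncomputable def adjMatrixG (G : Type*) [Group G] [Fintype G] : Matrix G G ℝ :=
  Matrix.of fun i j => if (strongPowerGraph G).Adj i j then 1 else 0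

open Matrix Polynomial

theorem Matrix.charpoly_vecMulVec_one_sub_one {R n : Type*} [CommRing R] [Fintype n]
    [DecidableEq n] [Nonempty n] :
    (vecMulVec (1 : n → R) 1 - 1).charpoly
      = (X - C ((Fintype.card n : R) - 1)) * (X + 1) ^ (Fintype.card n - 1) := by
  obtain ⟨m, hm⟩ : ∃ m, Fintype.card n = m + 1 := Nat.exists_eq_add_one.2 Fintype.card_pos
  rw [← (scalar n).map_one, charpoly_sub_scalar, charpoly_vecMulVec, one_dotProduct_one, hm]
  simp only [smul_eq_C_mul, map_sub, map_natCast, map_one, sub_comp, pow_comp, X_comp, mul_comp,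
    natCast_comp, add_tsub_cancel_right]
  ring

section NotCyclic

variable {G : Type*} [Group G] [Fintype G]

theorem orderOf_lt_card_of_not_isCyclic (hG : ¬ IsCyclic G) (x : G) :
    orderOf x < Fintype.card G :=
  orderOf_le_card_univ.lt_of_ne fun h ↦
    hG <| isCyclic_of_orderOf_eq_card x (h.trans Nat.card_eq_fintype_card.symm)

theorem strongPowerGraph_eq_top_of_not_isCyclic (hG : ¬ IsCyclic G) : strongPowerGraph G = ⊤ := by
  ext x y
  refine ⟨SimpleGraph.Adj.ne, fun hxy ↦ ⟨hxy, orderOf x, orderOf y, orderOf_pos x,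
    orderOf_lt_card_of_not_isCyclic hG x, orderOf_pos y, orderOf_lt_card_of_not_isCyclic hG y, ?_⟩⟩
  rw [pow_orderOf_eq_one, pow_orderOf_eq_one]

theorem distMatrixG_eq_of_not_isCyclic [DecidableEq G] (hG : ¬ IsCyclic G) :
    distMatrixG G = vecMulVec 1 1 - 1 := by
  ext i j
  simp [distMatrixG, strongPowerGraph_eq_top_of_not_isCyclic hG, SimpleGraph.dist_top, one_apply,
    apply_ite]

end NotCyclic

open Polynomial in
/-- If a finite group `G` of order `n` is not cyclic, then the characteristic polynomial
of the distance matrix of its strong power graph is `(x - (n-1)) * (x+1)^(n-1)`;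
equivalently its distance spectrum is `n-1` (multiplicity 1) and `-1` (multiplicity `n-1`). -/
theorem distMatrixG_charpoly_of_not_isCyclic
    (G : Type*) [Group G] [Fintype G] [DecidableEq G] (hG : ¬ IsCyclic G) :
    (distMatrixG G).charpoly =
      (X - C ((Fintype.card G : ℝ) - 1)) * (X + 1) ^ (Fintype.card G - 1) := by
  rw [distMatrixG_eq_of_not_isCyclic hG, charpoly_vecMulVec_one_sub_one]
end

section
/- Let n be a composite number and let f(x) = x^3 + (3-n)x^2 + (3 - 2n - 3φ(n))x - φ(n)^2 - φ(n)(4-n) - n + 1, where φ is Euler's totient function. Then f has three pairwise distinct real roots. -/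
/-- For a composite number `n`, the cubic
`f(x) = x³ + (3-n)x² + (3-2n-3φ(n))x - φ(n)² - φ(n)(4-n) - n + 1`
(where `φ` is Euler's totient function) has three pairwise distinct real roots. -/
theorem cubic_has_three_distinct_real_roots (n : ℕ) (hn : 2 ≤ n) (hnp : ¬ n.Prime)
    (f : ℝ → ℝ)
    (hf : ∀ x : ℝ, f x = x ^ 3 + ((3 : ℝ) - (n : ℝ)) * x ^ 2
      + ((3 : ℝ) - 2 * (n : ℝ) - 3 * (n.totient : ℝ)) * x
      - (n.totient : ℝ) ^ 2 - (n.totient : ℝ) * (4 - (n : ℝ)) - (n : ℝ) + 1) :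
    ∃ r₁ r₂ r₃ : ℝ, r₁ ≠ r₂ ∧ r₁ ≠ r₃ ∧ r₂ ≠ r₃ ∧ f r₁ = 0 ∧ f r₂ = 0 ∧ f r₃ = 0 := by
  -- basic arithmetic facts
  have hn4 : 4 ≤ n := by
    have h2 : n ≠ 2 := fun h => hnp (h ▸ Nat.prime_two)
    have h3 : n ≠ 3 := fun h => hnp (h ▸ Nat.prime_three)
    omega
  have htpos : 1 ≤ n.totient := Nat.totient_pos.mpr (by omega)
  have htlt : n.totient < n := Nat.totient_lt n (by omega)
  have htne : n.totient ≠ n - 1 := by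
    intro h
    exact hnp ((Nat.totient_eq_iff_prime (by omega)).mp h)
  have htle : n.totient ≤ n - 2 := by omega
  set N : ℝ := (n : ℝ) with hN
  set T : ℝ := (n.totient : ℝ) with hT
  have hN4 : (4 : ℝ) ≤ N := by rw [hN]; exact_mod_cast hn4
  have hT1 : (1 : ℝ) ≤ T := by rw [hT]; exact_mod_cast htpos
  have hTN : T ≤ N - 2 := by
    have : (n.totient : ℝ) ≤ ((n - 2 : ℕ) : ℝ) := by exact_mod_cast htle
    have h2 : ((n - 2 : ℕ) : ℝ) = N - 2 := by
      push_cast [Nat.cast_sub (by omega : 2 ≤ n)]; ring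
    linarith [this, h2.le]
  -- continuity
  have hc : Continuous f := by
    have hfe : f = fun x : ℝ => x ^ 3 + ((3 : ℝ) - N) * x ^ 2
        + ((3 : ℝ) - 2 * N - 3 * T) * x - T ^ 2 - T * (4 - N) - N + 1 := funext hf
    rw [hfe]; fun_prop
  -- sign evaluations
  have hA : f (-(N + T)) < 0 := by
    rw [hf]; nlinarith [sq_nonneg (N + T), sq_nonneg (N - T), sq_nonneg T, sq_nonneg N,
      mul_pos (by linarith : (0:ℝ) < N) (by linarith : (0:ℝ) < T),
      mul_nonneg (mul_nonneg (by linarith : (0:ℝ) ≤ N) (by linarith : (0:ℝ) ≤ N)) (by linarith : (0:ℝ) ≤ T)]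
  have hB : f (-1) > 0 := by
    rw [hf]
    have : (-1:ℝ) ^ 3 + (3 - N) * (-1) ^ 2 + (3 - 2*N - 3*T) * (-1) - T^2 - T*(4-N) - N + 1
        = T * (N - 1 - T) := by ring
    rw [show ((-1:ℝ)) = -1 from rfl]
    nlinarith [mul_pos (by linarith : (0:ℝ) < T) (by linarith : (0:ℝ) < N - 1 - T)]
  have hC : f (N - 2) < 0 := by
    rw [hf]
    have : (N-2) ^ 3 + (3 - N) * (N-2) ^ 2 + (3 - 2*N - 3*T) * (N-2) - T^2 - T*(4-N) - N + 1
        = -((N - 1 + T)) ^ 2 := by ring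
    nlinarith [sq_nonneg (N - 1 + T)]
  have hD : f (N + T) > 0 := by
    rw [hf]
    nlinarith [mul_pos (by linarith : (0:ℝ) < N) (by linarith : (0:ℝ) < T),
      mul_nonneg (mul_nonneg (by linarith : (0:ℝ) ≤ N) (by linarith : (0:ℝ) ≤ N)) (by linarith : (0:ℝ) ≤ T),
      sq_nonneg (T - 1), sq_nonneg N]
  -- ordering of points
  have h1 : -(N + T) < -1 := by linarith
  have h2 : (-1 : ℝ) < N - 2 := by linarith
  have h3 : N - 2 < N + T := by linarith
  -- IVT on the three intervals
  obtain ⟨r₁, hr₁m, hr₁⟩ := intermediate_value_Ioo h1.le hc.continuousOn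
    (by constructor <;> linarith : (0:ℝ) ∈ Set.Ioo (f (-(N+T))) (f (-1)))
  obtain ⟨r₂, hr₂m, hr₂⟩ := intermediate_value_Ioo' h2.le hc.continuousOn
    (by constructor <;> linarith : (0:ℝ) ∈ Set.Ioo (f (N-2)) (f (-1)))
  obtain ⟨r₃, hr₃m, hr₃⟩ := intermediate_value_Ioo h3.le hc.continuousOn
    (by constructor <;> linarith : (0:ℝ) ∈ Set.Ioo (f (N-2)) (f (N+T)))
  refine ⟨r₁, r₂, r₃, ?_, ?_, ?_, hr₁, hr₂, hr₃⟩
  · have := hr₁m.2; have := hr₂m.1; exact ne_of_lt (by linarith)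
  · have := hr₁m.2; have := hr₃m.1; exact ne_of_lt (by linarith)
  · have := hr₂m.2; have := hr₃m.1; exact ne_of_lt (by linarith)
end
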